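/- arXiv:2311.02415 — 8 statements merged into one kernel-verified Lean document; each statement's English description precedes it below -/
import Mathlib

section
/- Fix positive reals A, T, E, S, P with A·E/(A+T+E) ≤ P, and set α_edge = (T+E)/(A+T+E) and t_edge = A·(T+E)/(A+T+E). For every triple (α, β, κ) of nonnegative reals with α + β + κ = 1, α ≤ α_edge, and κ > 0, one has (1−α)·T + κ·S + P > t_edge. -/
/-- Terrestrial-user task partitioning: when `A*E/(A+T+E) ≤ P`, for any partition with
`α ≤ α_edge` and `κ > 0`, the cloud delay `(1-α)*T + κ*S + P` strictly exceeds the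
optimal local-edge delay `t_edge = A*(T+E)/(A+T+E)`. -/
theorem stmt_2 (A T E S P : ℝ) (hA : 0 < A) (hT : 0 < T) (hE : 0 < E)
    (hS : 0 < S) (hP : 0 < P) (hcond : A * E / (A + T + E) ≤ P)
    (α β κ : ℝ) (hα : 0 ≤ α) (hβ : 0 ≤ β) (hκ : 0 ≤ κ) (hsum : α + β + κ = 1)
    (hle : α ≤ (T + E) / (A + T + E)) (hκpos : 0 < κ) :
    (1 - α) * T + κ * S + P > A * (T + E) / (A + T + E) := by
  have hD : 0 < A + T + E := by linarith
  have hle' : α * (A + T + E) ≤ T + E := by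
    rw [← le_div_iff₀ hD]; exact hle
  have h1 : A / (A + T + E) ≤ 1 - α := by
    rw [div_le_iff₀ hD]; nlinarith
  have h2 : A / (A + T + E) * T ≤ (1 - α) * T :=
    mul_le_mul_of_nonneg_right h1 hT.le
  have hks : 0 < κ * S := mul_pos hκpos hS
  have key : A * (T + E) / (A + T + E) = A / (A + T + E) * T + A * E / (A + T + E) := by
    field_simp
  linarith
end

section
/- Fix positive reals A, T, E, S, P with A·E/(A+T+E) ≤ P, and set t_edge = A·(T+E)/(A+T+E). For every triple (α, β, κ) of nonnegative reals with α + β + κ = 1 and κ > 0, one has max{ α·A, (1−α)·T + β·E, (1−α)·T + κ·S + P } > t_edge. Consequently, the piecewise task completion delay t_total(α, β, κ) (equal to max{t_u, t_b} when κ = 0 and to max{t_u, t_b, t_c} when κ > 0) attains its minimum over the simplex {α, β, κ ≥ 0, α + β + κ = 1} at the point (α_edge, 1−α_edge, 0), where α_edge = (T+E)/(A+T+E), with minimum value t_edge. -/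
/-- The piecewise task completion delay of a terrestrial user: `max{t_u, t_b}` when no
data is offloaded to the cloud (`κ = 0`), and `max{t_u, t_b, t_c}` when `κ > 0`. -/
noncomputable def tTotalTUE (A T E S P α β κ : ℝ) : ℝ :=
  if κ = 0 then max (α * A) ((1 - α) * T + β * E)
  else max (α * A) (max ((1 - α) * T + β * E) ((1 - α) * T + κ * S + P))

/-- When `A*E/(A+T+E) ≤ P`, any partition with `κ > 0` has delay strictly larger than the
optimal local-edge delay `t_edge = A*(T+E)/(A+T+E)`; consequently the piecewise delay is
minimized over the simplex at `(α_edge, 1-α_edge, 0)` with value `t_edge`. -/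
theorem stmt_3 (A T E S P : ℝ) (hA : 0 < A) (hT : 0 < T) (hE : 0 < E)
    (hS : 0 < S) (hP : 0 < P) (hcond : A * E / (A + T + E) ≤ P) :
    (∀ α β κ : ℝ, 0 ≤ α → 0 ≤ β → 0 ≤ κ → α + β + κ = 1 → 0 < κ →
      max (α * A) (max ((1 - α) * T + β * E) ((1 - α) * T + κ * S + P))
        > A * (T + E) / (A + T + E)) ∧
    (∀ α β κ : ℝ, 0 ≤ α → 0 ≤ β → 0 ≤ κ → α + β + κ = 1 →
      tTotalTUE A T E S P α β κ ≥ A * (T + E) / (A + T + E)) ∧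
    tTotalTUE A T E S P ((T + E) / (A + T + E)) (1 - (T + E) / (A + T + E)) 0
      = A * (T + E) / (A + T + E) := by
  have hD : 0 < A + T + E := by linarith
  have key : ∀ α β κ : ℝ, 0 ≤ α → 0 ≤ β → 0 ≤ κ → α + β + κ = 1 → 0 < κ →
      max (α * A) (max ((1 - α) * T + β * E) ((1 - α) * T + κ * S + P))
        > A * (T + E) / (A + T + E) := by
    intro α β κ hα hβ hκ hsum hκpos
    rcases lt_or_ge (A * (T + E) / (A + T + E)) (α * A) with h | h
    · exact lt_max_of_lt_left h
    · have hα' : α * (A + T + E) ≤ T + E := by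
        rw [le_div_iff₀ hD] at h
        nlinarith
      have hcloud : A * (T + E) / (A + T + E) < (1 - α) * T + κ * S + P := by
        have h2 : A * E / (A + T + E) ≤ P := hcond
        have h3 : 0 < κ * S := mul_pos hκpos hS
        have h5 : A * (T + E) / (A + T + E) ≤ (1 - α) * T + P := by
          rw [div_le_iff₀ hD]
          rw [div_le_iff₀ hD] at h2
          nlinarith
        linarith
      exact lt_max_of_lt_right (lt_max_of_lt_right hcloud)
  refine ⟨key, ?_, ?_⟩
  · intro α β κ hα hβ hκ hsum
    unfold tTotalTUE
    split_ifs with h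
    · have hβ' : β = 1 - α := by rw [h] at hsum; linarith
      subst hβ'
      rcases le_or_gt ((T + E) / (A + T + E)) α with h1 | h1
      · have h2 : A * (T + E) / (A + T + E) ≤ α * A := by
          rw [div_le_iff₀ hD]
          have := (div_le_iff₀ hD).mp h1
          nlinarith
        exact le_trans h2 (le_max_left _ _)
      · have h3 : α * (A + T + E) < T + E := by
          have := (lt_div_iff₀ hD).mp h1
          linarith
        have h2 : A * (T + E) / (A + T + E) ≤ (1 - α) * T + (1 - α) * E := by
          rw [div_le_iff₀ hD]
          nlinarith
        exact le_trans h2 (le_max_right _ _)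
    · have hκpos : 0 < κ := lt_of_le_of_ne hκ (Ne.symm h)
      exact le_of_lt (key α β κ hα hβ hκ hsum hκpos)
  · unfold tTotalTUE
    simp only [if_pos rfl]
    have h1 : (T + E) / (A + T + E) * A = A * (T + E) / (A + T + E) := by ring
    have h2 : (1 - (T + E) / (A + T + E)) * T + (1 - (T + E) / (A + T + E)) * E
        = A * (T + E) / (A + T + E) := by
      field_simp; ring
    rw [h1, h2, max_self]
    simp
end

section
/- Fix positive reals A, T, E, S, P with A·E/(A+T+E) > P, and set t_edge = A·(T+E)/(A+T+E). Then there exists a triple (α, β, κ) of nonnegative reals with α + β + κ = 1 and κ > 0 such that max{ α·A, (1−α)·T + β·E, (1−α)·T + κ·S + P } < t_edge. -/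
set_option maxHeartbeats 800000


/-- When `A*E/(A+T+E) > P`, there exists a partition offloading a positive fraction to the
cloud whose task completion delay is strictly smaller than the optimal local-edge delay
`t_edge = A*(T+E)/(A+T+E)`. -/
theorem stmt_4 (A T E S P : ℝ) (hA : 0 < A) (hT : 0 < T) (hE : 0 < E)
    (hS : 0 < S) (hP : 0 < P) (hcond : A * E / (A + T + E) > P) :
    ∃ α β κ : ℝ, 0 ≤ α ∧ 0 ≤ β ∧ 0 ≤ κ ∧ α + β + κ = 1 ∧ 0 < κ ∧
      max (α * A) (max ((1 - α) * T + β * E) ((1 - α) * T + κ * S + P))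
        < A * (T + E) / (A + T + E) := by
  set D : ℝ := A + T + E with hD_def
  have hD : 0 < D := by positivity
  set g : ℝ := A * E / D - P with hg_def
  have hg : 0 < g := by
    rw [hg_def]; linarith [hcond]
  set κ : ℝ := min (g / (E + 2*S)) ((T+E)/D) with hκ_def
  have hκpos : 0 < κ := lt_min (by positivity) (by positivity)
  have hκ1 : κ ≤ g / (E + 2*S) := min_le_left _ _
  have hκ2 : κ ≤ (T+E)/D := min_le_right _ _
  have hκ1' : κ * (E + 2*S) ≤ g := by
    rw [← le_div_iff₀ (by positivity)]; exact hκ1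
  set ε : ℝ := κ * E / (2*(T+E)) with hε_def
  have hεpos : 0 < ε := by positivity
  have hεTE : ε * (T + E) = κ * E / 2 := by
    rw [hε_def]; field_simp
  clear_value D g κ ε
  have hεhalf : ε ≤ κ / 2 := by
    have h1 : ε * (T + E) ≤ (κ/2) * (T+E) := by
      rw [hεTE]
      have : κ * E ≤ κ * (T+E) := by nlinarith
      nlinarith
    have := mul_le_mul_of_nonneg_right (le_refl (1:ℝ)) (le_of_lt hεpos)
    nlinarith [mul_pos hT hεpos]
  -- 1 - (T+E)/D = A/D
  have hAD : 1 - (T+E)/D = A/D := by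
    field_simp
    rw [hD_def]; ring
  -- κ ≤ A/D
  have hκA : κ ≤ A / D := by
    have h1 : g ≤ A * E / D := by rw [hg_def]; linarith
    have h2 : κ * (E + 2*S) ≤ A * E / D := le_trans hκ1' h1
    have h3 : κ * E ≤ κ * (E + 2*S) := by nlinarith
    have h4 : κ * E ≤ A * E / D := le_trans h3 h2
    have h5 : κ * E ≤ (A/D) * E := by
      rw [div_mul_eq_mul_div]; linarith [h4]
    exact le_of_mul_le_mul_right (by linarith) hE
  refine ⟨(T+E)/D - ε, 1 - ((T+E)/D - ε) - κ, κ, ?_, ?_, le_of_lt hκpos, by ring,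
    hκpos, ?_⟩
  · -- α ≥ 0
    have : κ/2 ≤ (T+E)/D := by linarith [hκ2, hκpos]
    linarith [hεhalf]
  · -- β ≥ 0
    have : 1 - ((T+E)/D - ε) - κ = A/D + ε - κ := by linarith [hAD]
    rw [this]
    linarith [hκA, hεpos]
  · -- the max inequality
    have hsplit : A * (T+E) / D = (T+E)/D * A := by ring
    rw [max_lt_iff, max_lt_iff]
    have h1a : 1 - ((T+E)/D - ε) = A/D + ε := by linarith [hAD]
    have hAEdiv : A * (T+E) / D = A/D * T + A * E / D := by
      field_simp
    refine ⟨?_, ?_, ?_⟩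
    · rw [hsplit]
      nlinarith [mul_pos hεpos hA]
    · rw [h1a, hAEdiv]
      have hAE : A * E / D = A/D * E := by ring
      have hsum : ε*T + ε*E = ε*(T+E) := by ring
      nlinarith [hεTE, mul_pos hκpos hE, hAE, hsum]
    · rw [h1a, hAEdiv]
      -- need (A/D + ε)*T + κ*S + P < A/D*T + A*E/D
      have hεT : ε * T ≤ κ * E / 2 := by
        have h := mul_le_mul_of_nonneg_left (show T ≤ T + E by linarith) hεpos.le
        linarith [hεTE]
      have hAEg : A * E / D = g + P := by rw [hg_def]; ring
      have hlast : ε * T + κ * S < g := by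
        have hexp : κ * (E + 2*S) = κ * E + 2 * (κ * S) := by ring
        have : κ * E / 2 + κ * S ≤ g / 2 := by linarith [hκ1']
        linarith [hεT, hg]
      linarith [hlast, hAEg]
end

section
/- Fix positive reals A, T, E, S, P with A·E/(A+T+E) > P. Define X = T + E·S/(S+E), α_c = (X + E·P/(S+E)) / (A + X), κ_c = ((1−α_c)·E − P)/(S+E), and β_c = 1 − α_c − κ_c. Then α_c, β_c, κ_c are all strictly positive, α_c + β_c + κ_c = 1, α_c < 1, and the three delays coincide: α_c·A = (1−α_c)·T + β_c·E = (1−α_c)·T + κ_c·S + P. Moreover (α_c, β_c, κ_c) is the unique triple of nonnegative reals summing to 1 at which the three delays t_u(α) = α·A, t_b(α,β) = (1−α)·T + β·E, and t_c(α,κ) = (1−α)·T + κ·S + P are all equal. -/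
/-- Closed-form local-edge-cloud partitioning solution (paper eq. (36)): under
`A*E/(A+T+E) > P`, the triple `(α_c, β_c, κ_c)` defined below is a strictly positive
partition summing to `1` at which the local, edge, and cloud delays coincide, and it is
the unique such nonnegative partition. -/
theorem stmt_5 (A T E S P : ℝ) (hA : 0 < A) (hT : 0 < T) (hE : 0 < E)
    (hS : 0 < S) (hP : 0 < P) (hcond : A * E / (A + T + E) > P) :
    let X := T + E * S / (S + E)
    let αc := (X + E * P / (S + E)) / (A + X)
    let κc := ((1 - αc) * E - P) / (S + E)
    let βc := 1 - αc - κc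
    0 < αc ∧ 0 < βc ∧ 0 < κc ∧ αc + βc + κc = 1 ∧ αc < 1 ∧
    αc * A = (1 - αc) * T + βc * E ∧
    (1 - αc) * T + βc * E = (1 - αc) * T + κc * S + P ∧
    (∀ α β κ : ℝ, 0 ≤ α → 0 ≤ β → 0 ≤ κ → α + β + κ = 1 →
      α * A = (1 - α) * T + β * E →
      (1 - α) * T + β * E = (1 - α) * T + κ * S + P →
      α = αc ∧ β = βc ∧ κ = κc) := by
  intro X αc κc βc
  have hD : (0:ℝ) < S + E := by linarith
  have hATE : (0:ℝ) < A + T + E := by linarith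
  have hcond' : P * (A + T + E) < A * E := (lt_div_iff₀ hATE).mp hcond
  set N : ℝ := A * (S + E) + T * (S + E) + E * S with hNdef
  have hN : (0:ℝ) < N := by positivity
  have hXd : X = T + E * S / (S + E) := rfl
  have hαd : αc = (X + E * P / (S + E)) / (A + X) := rfl
  have hκd : κc = ((1 - αc) * E - P) / (S + E) := rfl
  have hβd : βc = 1 - αc - κc := rfl
  have hαc : αc = (T * (S + E) + E * S + E * P) / N := by
    rw [hαd, hXd, hNdef]
    have h1 : A + (T + E * S / (S + E)) ≠ 0 := by positivity
    field_simp
    ring_nf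
  have hκc : κc = (A * E - P * (A + T + E)) / N := by
    rw [hκd, hαc]
    field_simp
    ring
  have hβc : βc = (A * S + P * A + P * T) / N := by
    rw [hβd, hαc, hκc]
    field_simp
    ring
  have hα_pos : 0 < αc := by rw [hαc]; positivity
  have hβ_pos : 0 < βc := by rw [hβc]; positivity
  have hκ_pos : 0 < κc := by
    rw [hκc]; exact div_pos (by linarith) hN
  have hα_lt : αc < 1 := by
    rw [hαc, div_lt_one hN, hNdef]
    nlinarith
  have heq1 : αc * A = (1 - αc) * T + βc * E := by
    rw [hαc, hβc]
    field_simp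
    ring
  have heq2 : (1 - αc) * T + βc * E = (1 - αc) * T + κc * S + P := by
    rw [hαc, hβc, hκc]
    field_simp
    ring
  have hβcE : βc * (S + E) = (1 - αc) * S + P := by
    rw [hαc, hβc]
    field_simp
    ring
  refine ⟨hα_pos, hβ_pos, hκ_pos, by rw [hβd]; ring, hα_lt, heq1, heq2, ?_⟩
  intro α β κ h1 h2 h3 hsum e1 e2
  have hκ2 : κ = 1 - α - β := by linarith
  subst hκ2
  have e2' : β * E = (1 - α - β) * S + P := by linarith
  have eN : α * N = T * (S + E) + E * S + E * P := by
    rw [hNdef]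
    linear_combination (S + E) * e1 + E * e2'
  have hαeq : α = αc := by
    rw [hαc, eq_div_iff hN.ne']
    linarith
  have e1b : β * (S + E) = (1 - α) * S + P := by linear_combination e2'
  rw [hαeq] at e1b
  have hβeq : β = βc := mul_right_cancel₀ hD.ne' (e1b.trans hβcE.symm)
  exact ⟨hαeq, hβeq, by rw [hαeq, hβeq, hβd]; ring⟩
end

section
/- (Theorem 1.) Fix positive reals A, T, E, S, P with A·E/(A+T+E) > P. Let (α_c, β_c, κ_c) be the unique triple of nonnegative reals summing to 1 with α_c·A = (1−α_c)·T + β_c·E = (1−α_c)·T + κ_c·S + P, and set t_cloud = α_c·A. Then for every triple (α, β, κ) of nonnegative reals with α + β + κ = 1 for which the three delays α·A, (1−α)·T + β·E, and (1−α)·T + κ·S + P are not all equal, one has max{ α·A, (1−α)·T + β·E, (1−α)·T + κ·S + P } > t_cloud. In particular, max{t_u, t_b, t_c} over the simplex is minimized exactly at the boundary-condition point (α_c, β_c, κ_c). -/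
lemma stmt_6_key (A T E S : ℝ) (hA : 0 < A) (hT : 0 < T) (hE : 0 < E) (hS : 0 < S)
    (αc βc κc α β κ : ℝ) (hsumc : αc + βc + κc = 1) (hsum : α + β + κ = 1)
    (h1 : α * A ≤ αc * A)
    (h2 : (1 - α) * T + β * E ≤ (1 - αc) * T + βc * E)
    (h3 : (1 - α) * T + κ * S ≤ (1 - αc) * T + κc * S) :
    α = αc ∧ β = βc ∧ κ = κc := by
  have hα : α ≤ αc := le_of_mul_le_mul_right h1 hA
  have h2' : (β - βc) * E ≤ (α - αc) * T := by nlinarith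
  have h3' : (κ - κc) * S ≤ (α - αc) * T := by nlinarith
  have hαeq : α = αc := by
    nlinarith [mul_le_mul_of_nonneg_right h2' hS.le,
      mul_le_mul_of_nonneg_right h3' hE.le,
      mul_pos hE hS, mul_pos hT hS, mul_pos hT hE]
  subst hαeq
  have hβ : β ≤ βc := by nlinarith
  have hκ : κ ≤ κc := by nlinarith
  refine ⟨rfl, by linarith, by linarith⟩

/-- Theorem 1 of the paper: under `A*E/(A+T+E) > P`, if `(αc, βc, κc)` is the nonnegative
partition at which the three delays coincide (`t_cloud = αc*A` being the common value),
then every other partition whose three delays are not all equal has strictly larger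
completion delay; hence `max{t_u, t_b, t_c}` is minimized exactly at `(αc, βc, κc)`. -/
theorem stmt_6 (A T E S P : ℝ) (hA : 0 < A) (hT : 0 < T) (hE : 0 < E)
    (hS : 0 < S) (hP : 0 < P) (hcond : A * E / (A + T + E) > P)
    (αc βc κc : ℝ) (hαc : 0 ≤ αc) (hβc : 0 ≤ βc) (hκc : 0 ≤ κc)
    (hsumc : αc + βc + κc = 1)
    (heq1 : αc * A = (1 - αc) * T + βc * E)
    (heq2 : (1 - αc) * T + βc * E = (1 - αc) * T + κc * S + P) :
    (∀ α β κ : ℝ, 0 ≤ α → 0 ≤ β → 0 ≤ κ → α + β + κ = 1 →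
      ¬(α * A = (1 - α) * T + β * E ∧
        (1 - α) * T + β * E = (1 - α) * T + κ * S + P) →
      max (α * A) (max ((1 - α) * T + β * E) ((1 - α) * T + κ * S + P)) > αc * A) ∧
    (∀ α β κ : ℝ, 0 ≤ α → 0 ≤ β → 0 ≤ κ → α + β + κ = 1 →
      max (α * A) (max ((1 - α) * T + β * E) ((1 - α) * T + κ * S + P)) ≥ αc * A ∧
      (max (α * A) (max ((1 - α) * T + β * E) ((1 - α) * T + κ * S + P)) = αc * A →
        α = αc ∧ β = βc ∧ κ = κc)) := by
  have main : ∀ α β κ : ℝ, 0 ≤ α → 0 ≤ β → 0 ≤ κ → α + β + κ = 1 →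
      max (α * A) (max ((1 - α) * T + β * E) ((1 - α) * T + κ * S + P)) ≤ αc * A →
      α = αc ∧ β = βc ∧ κ = κc := by
    intro α β κ hα hβ hκ hsum hle
    have h1 : α * A ≤ αc * A := le_trans (le_max_left _ _) hle
    have h2 : (1 - α) * T + β * E ≤ (1 - αc) * T + βc * E := by
      have := le_trans (le_trans (le_max_left _ _) (le_max_right _ _)) hle
      linarith
    have h3 : (1 - α) * T + κ * S ≤ (1 - αc) * T + κc * S := by
      have := le_trans (le_trans (le_max_right _ _) (le_max_right _ _)) hle
      linarith
    exact stmt_6_key A T E S hA hT hE hS αc βc κc α β κ hsumc hsum h1 h2 h3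
  constructor
  · intro α β κ hα hβ hκ hsum hne
    by_contra hc
    push_neg at hc
    obtain ⟨e1, e2, e3⟩ := main α β κ hα hβ hκ hsum hc
    subst e1; subst e2; subst e3
    exact hne ⟨heq1, heq2⟩
  · intro α β κ hα hβ hκ hsum
    constructor
    · by_contra hc
      push_neg at hc
      obtain ⟨e1, e2, e3⟩ := main α β κ hα hβ hκ hsum hc.le
      subst e1
      simp at hc
    · intro hmax
      exact main α β κ hα hβ hκ hsum hmax.le
end

section
/- Fix positive reals A, T, E, S, P. The minimum over the simplex {(α, β, κ) : α, β, κ ≥ 0, α + β + κ = 1} of the piecewise task completion delay t_total (equal to max{α·A, (1−α)·T + β·E} when κ = 0, and to max{α·A, (1−α)·T + β·E, (1−α)·T + κ·S + P} when κ > 0) equals A·(T+E)/(A+T+E) when A·E/(A+T+E) ≤ P, and equals α_c·A when A·E/(A+T+E) > P, where α_c = (X + E·P/(S+E)) / (A + X) with X = T + E·S/(S+E). -/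
set_option maxHeartbeats 1600000 in
/-- The minimum of the piecewise task completion delay over the simplex equals the
local-edge optimum `A*(T+E)/(A+T+E)` when `A*E/(A+T+E) ≤ P`, and the local-edge-cloud
optimum `αc*A` when `A*E/(A+T+E) > P`. -/
theorem stmt_8 (A T E S P : ℝ) (hA : 0 < A) (hT : 0 < T) (hE : 0 < E)
    (hS : 0 < S) (hP : 0 < P) :
    let X := T + E * S / (S + E)
    let αc := (X + E * P / (S + E)) / (A + X)
    IsLeast {t : ℝ | ∃ α β κ : ℝ, 0 ≤ α ∧ 0 ≤ β ∧ 0 ≤ κ ∧ α + β + κ = 1 ∧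
        t = tTotalTUE A T E S P α β κ}
      (if A * E / (A + T + E) ≤ P then A * (T + E) / (A + T + E) else αc * A) := by
  intro X αc
  have hX : X = T + E * S / (S + E) := rfl
  have hαc : αc = (X + E * P / (S + E)) / (A + X) := rfl
  clear_value X αc
  have hSE : (0:ℝ) < S + E := by linarith
  have hATE : (0:ℝ) < A + T + E := by linarith
  have hXpos : 0 < X := by rw [hX]; positivity
  have hAX : (0:ℝ) < A + X := by linarith
  have hcpos : 0 < E * P / (S + E) := by positivity
  have hkey : αc * A = (1 - αc) * X + E * P / (S + E) := by
    rw [hαc]; field_simp; ring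
  -- identity for the comparison of the two candidate optima
  have hid2 : αc * A - A * (T + E) / (A + T + E)
      = A * E * (P * (A + T + E) - A * E) / ((S + E) * (A + X) * (A + T + E)) := by
    rw [hαc, hX]; field_simp; ring
  -- lower bound for points with κ = 0
  have hLB1 : ∀ α β : ℝ, 0 ≤ α → β = 1 - α →
      A * (T + E) / (A + T + E) ≤ max (α * A) ((1 - α) * T + β * E) := by
    intro α β ha hb
    subst hb
    set m := A * (T + E) / (A + T + E) with hm
    have hmval : m * (A + T + E) = A * (T + E) := by rw [hm]; field_simp
    by_contra hcon
    push_neg at hcon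
    have h1 : α * A < m := lt_of_lt_of_le (lt_of_le_of_lt (le_max_left _ _) hcon) le_rfl
    have h2 : (1 - α) * T + (1 - α) * E < m :=
      lt_of_le_of_lt (le_max_right _ _) hcon
    nlinarith [mul_lt_mul_of_pos_right h1 (show (0:ℝ) < T + E by linarith),
      mul_lt_mul_of_pos_right h2 hA]
  -- lower bound for points with κ > 0
  have hLB2 : ∀ α β κ : ℝ, 0 ≤ α → 0 ≤ β → 0 < κ → α + β + κ = 1 →
      αc * A ≤ max (α * A) (max ((1 - α) * T + β * E) ((1 - α) * T + κ * S + P)) := by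
    intro α β κ ha hb hk hsum
    have hβ : β = 1 - α - κ := by linarith
    have hcomb : S / (S + E) * ((1 - α) * T + β * E) + E / (S + E) * ((1 - α) * T + κ * S + P)
        = (1 - α) * X + E * P / (S + E) := by
      rw [hβ, hX]; field_simp; ring
    have h1 : (1 - α) * X + E * P / (S + E)
        ≤ max ((1 - α) * T + β * E) ((1 - α) * T + κ * S + P) := by
      have h2 := le_max_left ((1 - α) * T + β * E) ((1 - α) * T + κ * S + P)
      have h3 := le_max_right ((1 - α) * T + β * E) ((1 - α) * T + κ * S + P)
      have hw1 : (0:ℝ) ≤ S / (S + E) := by positivity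
      have hw2 : (0:ℝ) ≤ E / (S + E) := by positivity
      have hw : S / (S + E) + E / (S + E) = 1 := by field_simp
      calc (1 - α) * X + E * P / (S + E)
          = S / (S + E) * ((1 - α) * T + β * E)
            + E / (S + E) * ((1 - α) * T + κ * S + P) := hcomb.symm
        _ ≤ S / (S + E) * (((1 - α) * T + β * E) ⊔ ((1 - α) * T + κ * S + P))
            + E / (S + E) * (((1 - α) * T + β * E) ⊔ ((1 - α) * T + κ * S + P)) :=
            add_le_add (mul_le_mul_of_nonneg_left h2 hw1) (mul_le_mul_of_nonneg_left h3 hw2)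
        _ = (S / (S + E) + E / (S + E)) * (((1 - α) * T + β * E) ⊔ ((1 - α) * T + κ * S + P)) := by
            ring
        _ = _ := by rw [hw, one_mul]
    rcases le_or_gt αc α with h | h
    · exact le_trans (mul_le_mul_of_nonneg_right h hA.le) (le_max_left _ _)
    · refine le_trans ?_ (le_trans h1 (le_max_right _ _))
      rw [hkey]
      nlinarith
  constructor
  · -- membership: exhibit the optimal partition
    by_cases hcond : A * E / (A + T + E) ≤ P
    · rw [if_pos hcond]
      refine ⟨(T + E) / (A + T + E), A / (A + T + E), 0, by positivity, by positivity,
        le_refl 0, by field_simp; ring, ?_⟩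
      rw [tTotalTUE, if_pos rfl]
      have e1 : (T + E) / (A + T + E) * A = A * (T + E) / (A + T + E) := by ring
      have e2 : (1 - (T + E) / (A + T + E)) * T + A / (A + T + E) * E
          = A * (T + E) / (A + T + E) := by field_simp; ring
      rw [e1, e2, max_self]
    · rw [if_neg hcond]
      push_neg at hcond
      have hP' : P * (A + T + E) < A * E := by
        rw [lt_div_iff₀ hATE] at hcond; linarith
      have hidκ : (1 - αc) * E - P = (A * E - P * (A + T + E)) / (A + X) := by
        rw [hαc, hX]; field_simp; ring
      have hκnum : 0 < (1 - αc) * E - P := by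
        rw [hidκ]; apply div_pos (by linarith) hAX
      have h1ac : 0 < 1 - αc := by nlinarith
      have hαcpos : 0 < αc := by
        rw [hαc]; exact div_pos (by linarith) hAX
      refine ⟨αc, ((1 - αc) * S + P) / (S + E), ((1 - αc) * E - P) / (S + E),
        le_of_lt hαcpos, by positivity, le_of_lt (div_pos hκnum hSE), by field_simp; ring, ?_⟩
      have hκne : ((1 - αc) * E - P) / (S + E) ≠ 0 := ne_of_gt (div_pos hκnum hSE)
      rw [tTotalTUE, if_neg hκne]
      have htb : (1 - αc) * T + ((1 - αc) * S + P) / (S + E) * E = αc * A := by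
        rw [hkey, hX]; field_simp; ring
      have htc : (1 - αc) * T + ((1 - αc) * E - P) / (S + E) * S + P = αc * A := by
        rw [hkey, hX]; field_simp; ring
      rw [htb, htc, max_self, max_self]
  · -- lower bound
    rintro t ⟨α, β, κ, ha, hb, hk, hsum, ht⟩
    subst ht
    rw [tTotalTUE]
    split_ifs with hcond hk0 hk0
    · -- edge case value, κ = 0
      subst hk0
      exact hLB1 α β ha (by linarith)
    · -- edge case value, κ > 0 : m1 ≤ αc*A ≤ t
      have hκpos : 0 < κ := lt_of_le_of_ne hk (Ne.symm hk0)
      have hP' : A * E ≤ P * (A + T + E) := by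
        rw [div_le_iff₀ hATE] at hcond; linarith
      have hsign : 0 ≤ A * E * (P * (A + T + E) - A * E) / ((S + E) * (A + X) * (A + T + E)) :=
        div_nonneg (mul_nonneg (by positivity) (by linarith))
          (le_of_lt (mul_pos (mul_pos hSE hAX) hATE))
      have h1 : A * (T + E) / (A + T + E) ≤ αc * A := by linarith [hid2]
      exact le_trans h1 (hLB2 α β κ ha hb hκpos hsum)
    · -- cloud case value, κ = 0 : αc*A ≤ m1 ≤ t
      subst hk0
      push_neg at hcond
      have hP' : P * (A + T + E) < A * E := by
        rw [lt_div_iff₀ hATE] at hcond; linarith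
      have hsign : A * E * (P * (A + T + E) - A * E) / ((S + E) * (A + X) * (A + T + E)) ≤ 0 :=
        div_nonpos_of_nonpos_of_nonneg
          (mul_nonpos_of_nonneg_of_nonpos (by positivity) (by linarith))
          (le_of_lt (mul_pos (mul_pos hSE hAX) hATE))
      have h1 : αc * A ≤ A * (T + E) / (A + T + E) := by linarith [hid2]
      exact le_trans h1 (hLB1 α β ha (by linarith))
    · have hκpos : 0 < κ := lt_of_le_of_ne hk (Ne.symm hk0)
      exact hLB2 α β κ ha hb hκpos hsum
end

section
/- Fix positive reals A, S, P. The minimum over κ ∈ [0,1] of the piecewise satellite-user task completion delay (equal to A when κ = 0, and to max{(1−κ)·A, κ·S + P} when κ > 0) equals A when A ≤ P, and equals A·(S+P)/(S+A) (which is strictly smaller than A) when A > P, the latter being attained at κ_c = (A−P)/(S+A). -/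
/-- The piecewise satellite-user task completion delay: local delay `(1-κ)*A` when `κ = 0`,
and `max{(1-κ)*A, κ*S + P}` when `κ > 0`. -/
noncomputable def tTotalSUE (A S P κ : ℝ) : ℝ :=
  if κ = 0 then A else max ((1 - κ) * A) (κ * S + P)

/-- The minimum over `κ ∈ [0,1]` of the piecewise satellite-user delay equals `A` when
`A ≤ P`, and equals `A*(S+P)/(S+A) < A` when `A > P`, attained at `κc = (A-P)/(S+A)`. -/
theorem stmt_11 (A S P : ℝ) (hA : 0 < A) (hS : 0 < S) (hP : 0 < P) :
    (A ≤ P →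
      IsLeast {t : ℝ | ∃ κ ∈ Set.Icc (0 : ℝ) 1, t = tTotalSUE A S P κ} A) ∧
    (A > P →
      IsLeast {t : ℝ | ∃ κ ∈ Set.Icc (0 : ℝ) 1, t = tTotalSUE A S P κ}
        (A * (S + P) / (S + A)) ∧
      A * (S + P) / (S + A) < A ∧
      tTotalSUE A S P ((A - P) / (S + A)) = A * (S + P) / (S + A)) := by
  have hSA : 0 < S + A := by linarith
  constructor
  · intro hAP
    constructor
    · exact ⟨0, ⟨le_refl 0, by norm_num⟩, by simp [tTotalSUE]⟩
    · rintro t ⟨κ, ⟨hκ0, hκ1⟩, rfl⟩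
      unfold tTotalSUE
      split_ifs with h
      · exact le_refl A
      · have hκpos : 0 < κ := lt_of_le_of_ne hκ0 (Ne.symm h)
        have : A ≤ κ * S + P := by nlinarith
        exact this.trans (le_max_right _ _)
  · intro hAP
    have hκc : (A - P) / (S + A) ≠ 0 := by
      apply div_ne_zero <;> [linarith; linarith]
    have hval : tTotalSUE A S P ((A - P) / (S + A)) = A * (S + P) / (S + A) := by
      unfold tTotalSUE
      rw [if_neg hκc]
      have h1 : (1 - (A - P) / (S + A)) * A = A * (S + P) / (S + A) := by
        field_simp; ring
      have h2 : (A - P) / (S + A) * S + P = A * (S + P) / (S + A) := by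
        field_simp; ring
      rw [h1, h2, max_self]
    refine ⟨⟨⟨(A - P) / (S + A), ⟨?_, ?_⟩, hval.symm⟩, ?_⟩, ?_, hval⟩
    · exact div_nonneg (by linarith) hSA.le
    · rw [div_le_one hSA]; linarith
    · rintro t ⟨κ, ⟨hκ0, hκ1⟩, rfl⟩
      unfold tTotalSUE
      split_ifs with h
      · rw [div_le_iff₀ hSA]; nlinarith
      · have hκpos : 0 < κ := lt_of_le_of_ne hκ0 (Ne.symm h)
        rcases le_or_gt κ ((A - P) / (S + A)) with hle | hlt
        · refine le_max_of_le_left ?_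
          rw [div_le_iff₀ hSA]
          rw [le_div_iff₀ hSA] at hle
          nlinarith
        · refine le_max_of_le_right ?_
          rw [div_le_iff₀ hSA]
          rw [div_lt_iff₀ hSA] at hlt
          nlinarith
    · rw [div_lt_iff₀ hSA]; nlinarith
end

section
/- Fix positive reals A, T, E, S, P with A·E/(A+T+E) > P, and let (α_c, β_c, κ_c) be the unique nonnegative triple summing to 1 with α_c·A = (1−α_c)·T + β_c·E = (1−α_c)·T + κ_c·S + P; set t_cloud = α_c·A. If a triple (α, β, κ) of nonnegative reals with α + β + κ = 1 satisfies α ≤ α_c and β ≤ β_c, then κ ≥ κ_c > 0 and (1−α)·T + κ·S + P ≥ t_cloud, with equality (1−α)·T + κ·S + P = t_cloud holding only if α = α_c and β = β_c. -/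
/-- Key inequality chain (eqs. (47)–(48)) in the proof of the paper's Theorem 1: under
`A*E/(A+T+E) > P`, with `(αc, βc, κc)` the boundary-condition partition of common delay
`t_cloud = αc*A`, any partition with `α ≤ αc` and `β ≤ βc` has `κ ≥ κc > 0` and cloud
delay at least `t_cloud`, with equality only if `α = αc` and `β = βc`. -/
theorem stmt_12 (A T E S P : ℝ) (hA : 0 < A) (hT : 0 < T) (hE : 0 < E)
    (hS : 0 < S) (hP : 0 < P) (hcond : A * E / (A + T + E) > P)
    (αc βc κc : ℝ) (hαc : 0 ≤ αc) (hβc : 0 ≤ βc) (hκc : 0 ≤ κc)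
    (hsumc : αc + βc + κc = 1)
    (heq1 : αc * A = (1 - αc) * T + βc * E)
    (heq2 : (1 - αc) * T + βc * E = (1 - αc) * T + κc * S + P)
    (α β κ : ℝ) (hα : 0 ≤ α) (hβ : 0 ≤ β) (hκ : 0 ≤ κ) (hsum : α + β + κ = 1)
    (hαle : α ≤ αc) (hβle : β ≤ βc) :
    κ ≥ κc ∧ 0 < κc ∧
    (1 - α) * T + κ * S + P ≥ αc * A ∧
    ((1 - α) * T + κ * S + P = αc * A → α = αc ∧ β = βc) := by
  have hden : 0 < A + T + E := by linarith
  have hcond' : A * E > P * (A + T + E) := by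
    have := (lt_div_iff₀ hden).mp hcond
    linarith
  have hκge : κ ≥ κc := by linarith
  have hκcpos : 0 < κc := by
    rcases lt_or_eq_of_le hκc with h | h
    · exact h
    · exfalso
      have hz : κc = 0 := h.symm
      have hPE : βc * E = P := by nlinarith
      have hb : βc * (A + T + E) = A := by nlinarith
      have h4 : P * (A + T + E) = A * E := by
        calc P * (A + T + E) = (βc * E) * (A + T + E) := by rw [hPE]
        _ = (βc * (A + T + E)) * E := by ring
        _ = A * E := by rw [hb]
      linarith
  have hkey : (1 - αc) * T + κc * S + P = αc * A := by linarith
  have h2 : 0 ≤ (αc - α) * T := mul_nonneg (by linarith) hT.le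
  have h3 : 0 ≤ (κ - κc) * S := mul_nonneg (by linarith) hS.le
  have hineq : (1 - α) * T + κ * S + P ≥ αc * A := by nlinarith
  refine ⟨hκge, hκcpos, hineq, ?_⟩
  intro he
  have h1 : (αc - α) * T + (κ - κc) * S = 0 := by nlinarith
  have h4 : (αc - α) * T = 0 := by linarith
  have h5 : (κ - κc) * S = 0 := by linarith
  have hαeq : α = αc := by
    rcases mul_eq_zero.mp h4 with h | h
    · linarith
    · exact absurd h hT.ne'
  have hκeq : κ = κc := by
    rcases mul_eq_zero.mp h5 with h | h
    · linarith
    · exact absurd h hS.ne'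
  exact ⟨hαeq, by linarith⟩
end
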